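/- Let Φ be the standard normal cumulative distribution function and, for a positive integer k and real n > 2k, set Φ_{k,n} = Φ((2k − n)/√n). For c > 0 and k > 2c, let n₀(c,k) be the smallest real value n > 2k with Φ_{k,n} ≤ c/k; explicitly, n₀(c,k) = ((√(8k + z²) − z)/2)² where z = Φ^{−1}(c/k). Then for any fixed 0 < c' < c there exists a finite constant C = C(c,c') such that limsup over k₀ → ∞ of sup_{k ≥ k₀} |n₀(c,k) − n₀(c',k)| / √(n₀(c,k)) is at most C; in particular one may take C = 1 + 2 C₁ Φ^{−1}(1 − c'/(2c)) where C₁ is a uniform bound on the z-derivative of z ↦ (√(8k + z²) − z)/2. -/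

import Mathlib

open scoped BigOperators

/-- The standard normal cumulative distribution function
`Φ(z) = (2π)^{−1/2} ∫_{−∞}^{z} e^{−t²/2} dt`. -/
noncomputable def stdNormCDF (z : ℝ) : ℝ :=
  (Real.sqrt (2 * Real.pi))⁻¹ * ∫ t in Set.Iic z, Real.exp (-(t ^ 2) / 2)

/-- The inverse (quantile function) of the standard normal CDF. -/
noncomputable def PhiInv : ℝ → ℝ := Function.invFun stdNormCDF

/-- `n₀(c,k) = ((√(8k + z²) − z)/2)²` where `z = Φ⁻¹(c/k)`: the smallest real `n > 2k`
with `Φ((2k − n)/√n) ≤ c/k`. -/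
noncomputable def n0 (c : ℝ) (k : ℕ) : ℝ :=
  ((Real.sqrt (8 * k + (PhiInv (c / k)) ^ 2) - PhiInv (c / k)) / 2) ^ 2

/-!
With `z = Φ⁻¹(c/k)`, `n₀(c,k) = f²` where `f = (√(8k + z²) − z)/2` is the positive root of
`f² + z f = 2k`; in the variable `u = √n` the condition `(2k − n)/√n ≤ z` reads
`u² + z u ≥ 2k`, i.e. `u ≥ f`, which is the minimality of `n₀`.

For stability, `z ↦ f` is antitone and 1-Lipschitz with `f ≥ −z`. Once `c/k ≤ Φ(−1)` both
quantiles `z' < z` lie below `−1`; Mills' inequality `(−z') Φ(z') ≤ φ(z')` and `φ ≥ φ(z')` on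
`[z', z]` give `(z − z') Φ(z') ≤ Φ(z) − Φ(z')`, i.e. `z − z' ≤ M := (c − c')/c'`. Hence
`n₀(c',k) − n₀(c,k) = (f' − f)(f' + f) ≤ M (2f + M) ≤ (2 + M) M f`, using `f ≥ 1`.
-/

open MeasureTheory Set Filter Topology Real

lemma exp_neg_sq_div_two_eq (t : ℝ) : exp (-(t ^ 2) / 2) = exp (-(1 / 2) * t ^ 2) := by
  ring_nf

lemma integrable_exp_neg_sq_div_two : Integrable fun t : ℝ => exp (-(t ^ 2) / 2) := by
  simpa only [exp_neg_sq_div_two_eq] using integrable_exp_neg_mul_sq (b := 1 / 2) (by norm_num)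

lemma integral_exp_neg_sq_div_two : ∫ t : ℝ, exp (-(t ^ 2) / 2) = √(2 * π) := by
  simp only [exp_neg_sq_div_two_eq, integral_gaussian]
  congr 1
  ring

lemma sqrt_two_pi_pos : 0 < √(2 * π) := by positivity

lemma stdNormCDF_nonneg (z : ℝ) : 0 ≤ stdNormCDF z := by
  unfold stdNormCDF
  positivity

lemma stdNormCDF_sub (a b : ℝ) :
    stdNormCDF b - stdNormCDF a = (√(2 * π))⁻¹ * ∫ t in a..b, exp (-(t ^ 2) / 2) := by
  rw [stdNormCDF, stdNormCDF, ← mul_sub, intervalIntegral.integral_Iic_sub_Iic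
    integrable_exp_neg_sq_div_two.integrableOn integrable_exp_neg_sq_div_two.integrableOn]

lemma stdNormCDF_strictMono : StrictMono stdNormCDF := by
  intro a b hab
  rw [← sub_pos, stdNormCDF_sub]
  exact mul_pos (inv_pos.2 sqrt_two_pi_pos)
    (intervalIntegral.intervalIntegral_pos_of_pos_on
      integrable_exp_neg_sq_div_two.intervalIntegrable (fun t _ => exp_pos _) hab)

lemma stdNormCDF_pos (z : ℝ) : 0 < stdNormCDF z :=
  (stdNormCDF_nonneg (z - 1)).trans_lt (stdNormCDF_strictMono (by linarith))

lemma continuous_stdNormCDF : Continuous stdNormCDF := by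
  have h : stdNormCDF =
      fun z => stdNormCDF 0 + (√(2 * π))⁻¹ * ∫ t in (0 : ℝ)..z, exp (-(t ^ 2) / 2) :=
    funext fun z => by rw [← stdNormCDF_sub, add_sub_cancel]
  rw [h]
  exact continuous_const.add (continuous_const.mul (intervalIntegral.continuous_primitive
    (fun _ _ => integrable_exp_neg_sq_div_two.intervalIntegrable) 0))

lemma tendsto_stdNormCDF_atBot : Tendsto stdNormCDF atBot (𝓝 0) := by
  have h : stdNormCDF =
      fun z => stdNormCDF 0 - (√(2 * π))⁻¹ * ∫ t in z..(0 : ℝ), exp (-(t ^ 2) / 2) :=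
    funext fun z => by rw [← stdNormCDF_sub, sub_sub_cancel]
  have hlim : Tendsto (fun z => (√(2 * π))⁻¹ * ∫ t in z..(0 : ℝ), exp (-(t ^ 2) / 2))
      atBot (𝓝 (stdNormCDF 0)) := (intervalIntegral_tendsto_integral_Iic 0
    integrable_exp_neg_sq_div_two.integrableOn tendsto_id).const_mul (√(2 * π))⁻¹
  rw [h]
  simpa only [sub_self] using (tendsto_const_nhds (x := stdNormCDF 0)).sub hlim

lemma stdNormCDF_zero : stdNormCDF 0 = 1 / 2 := by
  have hsymm : ∫ t in Ioi (0 : ℝ), exp (-(t ^ 2) / 2) = ∫ t in Iic 0, exp (-(t ^ 2) / 2) := by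
    have h := (integral_comp_neg_Iic 0 fun t => exp (-(t ^ 2) / 2)).symm
    simp only [neg_zero, even_two, Even.neg_pow] at h
    exact h
  have htotal := intervalIntegral.integral_Iic_add_Ioi (b := 0)
    integrable_exp_neg_sq_div_two.integrableOn integrable_exp_neg_sq_div_two.integrableOn
  rw [hsymm, integral_exp_neg_sq_div_two] at htotal
  rw [stdNormCDF, show ∫ t in Iic (0 : ℝ), exp (-(t ^ 2) / 2) = √(2 * π) / 2 by linarith]
  field_simp

lemma stdNormCDF_PhiInv {p : ℝ} (hp0 : 0 < p) (hp : p ≤ 1 / 2) : stdNormCDF (PhiInv p) = p := by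
  obtain ⟨a, ha, ha0⟩ :=
    ((tendsto_stdNormCDF_atBot.eventually_lt_const hp0).and (eventually_le_atBot 0)).exists
  obtain ⟨z, -, hz⟩ := intermediate_value_Icc ha0 continuous_stdNormCDF.continuousOn
    ⟨ha.le, stdNormCDF_zero ▸ hp⟩
  exact Function.invFun_eq ⟨z, hz⟩

lemma PhiInv_le_of_le_stdNormCDF {p x : ℝ} (hp0 : 0 < p) (hp : p ≤ 1 / 2)
    (h : p ≤ stdNormCDF x) : PhiInv p ≤ x :=
  stdNormCDF_strictMono.le_iff_le.1 (by rwa [stdNormCDF_PhiInv hp0 hp])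

-- Mills' inequality: `∫_{t ≤ z} (-t) e^{-t²/2} dt = e^{-z²/2}` and `-t ≥ -z` on the range.
lemma sqrt_two_pi_mul_stdNormCDF_mul_neg_le (z : ℝ) :
    √(2 * π) * stdNormCDF z * (-z) ≤ exp (-(z ^ 2) / 2) := by
  have hderiv : ∀ t ∈ Iic z,
      HasDerivAt (fun t : ℝ => exp (-(t ^ 2) / 2)) (-t * exp (-(t ^ 2) / 2)) t := fun t _ => by
    refine ((hasDerivAt_pow 2 t).neg.div_const 2).exp.congr_deriv ?_
    simp only [Pi.neg_apply, Nat.cast_ofNat]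
    ring
  have hint : IntegrableOn (fun t : ℝ => -t * exp (-(t ^ 2) / 2)) (Iic z) := by
    simpa only [exp_neg_sq_div_two_eq, neg_mul] using
      (integrable_mul_exp_neg_mul_sq (b := 1 / 2) (by norm_num)).fun_neg.integrableOn
  have hlim : Tendsto (fun t : ℝ => exp (-(t ^ 2) / 2)) atBot (𝓝 0) := by
    refine tendsto_exp_atBot.comp ?_
    simpa only [sq, Function.comp_def, id] using (tendsto_neg_atTop_atBot.comp
      (tendsto_id.atBot_mul_atBot₀ tendsto_id)).atBot_div_const two_pos
  have hFTC : ∫ t in Iic z, -t * exp (-(t ^ 2) / 2) = exp (-(z ^ 2) / 2) := by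
    rw [integral_Iic_of_hasDerivAt_of_tendsto' hderiv hint hlim, sub_zero]
  rw [stdNormCDF, mul_inv_cancel_left₀ sqrt_two_pi_pos.ne', mul_comm, ← integral_const_mul,
    ← hFTC]
  refine setIntegral_mono_on (integrable_exp_neg_sq_div_two.const_mul _).integrableOn hint
    measurableSet_Iic fun t ht => ?_
  exact mul_le_mul_of_nonneg_right (neg_le_neg ht) (exp_pos _).le

lemma sub_mul_exp_le_sqrt_two_pi_mul_stdNormCDF_sub {a b : ℝ} (hab : a ≤ b) (hb : b ≤ -a) :
    (b - a) * exp (-(a ^ 2) / 2) ≤ √(2 * π) * (stdNormCDF b - stdNormCDF a) := by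
  rw [stdNormCDF_sub, ← mul_assoc, mul_inv_cancel₀ sqrt_two_pi_pos.ne', one_mul]
  calc (b - a) * exp (-(a ^ 2) / 2) = ∫ _ in a..b, exp (-(a ^ 2) / 2) := by simp
    _ ≤ ∫ t in a..b, exp (-(t ^ 2) / 2) :=
      intervalIntegral.integral_mono_on hab intervalIntegrable_const
        integrable_exp_neg_sq_div_two.intervalIntegrable
        fun t ht => exp_le_exp.2 (by nlinarith [ht.1, ht.2])

lemma sub_mul_stdNormCDF_le_sub {a b : ℝ} (ha : a ≤ -1) (hab : a ≤ b) (hb : b ≤ -a) :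
    (b - a) * stdNormCDF a ≤ stdNormCDF b - stdNormCDF a := by
  have hmills := sqrt_two_pi_mul_stdNormCDF_mul_neg_le a
  have hgap := sub_mul_exp_le_sqrt_two_pi_mul_stdNormCDF_sub hab hb
  have hd : 0 ≤ (b - a) * stdNormCDF a := mul_nonneg (by linarith) (stdNormCDF_nonneg a)
  refine le_of_mul_le_mul_left ?_ sqrt_two_pi_pos
  calc √(2 * π) * ((b - a) * stdNormCDF a)
      ≤ √(2 * π) * ((b - a) * stdNormCDF a) * (-a) :=
        le_mul_of_one_le_right (mul_nonneg sqrt_two_pi_pos.le hd) (by linarith)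
    _ = (b - a) * (√(2 * π) * stdNormCDF a * (-a)) := by ring
    _ ≤ (b - a) * exp (-(a ^ 2) / 2) := mul_le_mul_of_nonneg_left hmills (by linarith)
    _ ≤ √(2 * π) * (stdNormCDF b - stdNormCDF a) := hgap

lemma stdNormCDF_neg_one_lt_half : stdNormCDF (-1) < 1 / 2 :=
  stdNormCDF_zero ▸ stdNormCDF_strictMono (by norm_num)

lemma PhiInv_sub_PhiInv_le {p q : ℝ} (hq : 0 < q) (hqp : q ≤ p) (hp : p ≤ stdNormCDF (-1)) :
    PhiInv p - PhiInv q ≤ (p - q) / q := by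
  have hp0 : 0 < p := hq.trans_le hqp
  have hp2 : p ≤ 1 / 2 := hp.trans stdNormCDF_neg_one_lt_half.le
  have hΦp := stdNormCDF_PhiInv hp0 hp2
  have hΦq := stdNormCDF_PhiInv hq (hqp.trans hp2)
  have hz : PhiInv p ≤ -1 := PhiInv_le_of_le_stdNormCDF hp0 hp2 hp
  have hzz' : PhiInv q ≤ PhiInv p :=
    PhiInv_le_of_le_stdNormCDF hq (hqp.trans hp2) (hqp.trans_eq hΦp.symm)
  have h := sub_mul_stdNormCDF_le_sub (hzz'.trans hz) hzz' (by linarith)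
  rw [hΦp, hΦq] at h
  rwa [le_div_iff₀ hq]

lemma abs_sqrt_add_sq_sub_sqrt_add_sq_le {a : ℝ} (ha : 0 ≤ a) (x y : ℝ) :
    |√(a + x ^ 2) - √(a + y ^ 2)| ≤ |x - y| := by
  have key : ∀ x y : ℝ, √(a + x ^ 2) ≤ √(a + y ^ 2) + |x - y| := fun x y => by
    have hy : |y| ≤ √(a + y ^ 2) := by
      rw [← sqrt_sq_eq_abs]
      exact sqrt_le_sqrt (by linarith)
    have hxy : y * (x - y) ≤ |y| * |x - y| := by
      rw [← abs_mul]
      exact le_abs_self _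
    rw [sqrt_le_left (by positivity)]
    nlinarith [sq_sqrt (show 0 ≤ a + y ^ 2 by positivity), sq_abs (x - y), abs_nonneg (x - y)]
  rw [abs_sub_le_iff]
  exact ⟨by linarith [key x y], by linarith [key y x, abs_sub_comm x y]⟩

-- The positive root `f` of `f ^ 2 + z * f = 2 * k`; `n0 c k = posRoot k (PhiInv (c / k)) ^ 2`.
noncomputable def posRoot (k z : ℝ) : ℝ := (√(8 * k + z ^ 2) - z) / 2

section posRoot

variable {k : ℝ}

lemma abs_le_sqrt_eight_mul_add_sq (hk : 0 ≤ k) (z : ℝ) : |z| ≤ √(8 * k + z ^ 2) := by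
  rw [← sqrt_sq_eq_abs]
  exact sqrt_le_sqrt (by linarith)

lemma sq_posRoot_add_mul (hk : 0 ≤ k) (z : ℝ) : posRoot k z ^ 2 + z * posRoot k z = 2 * k := by
  have := sq_sqrt (show 0 ≤ 8 * k + z ^ 2 by positivity)
  unfold posRoot
  nlinarith

lemma neg_le_posRoot (hk : 0 ≤ k) (z : ℝ) : -z ≤ posRoot k z := by
  have := abs_le_sqrt_eight_mul_add_sq hk z
  unfold posRoot
  linarith [neg_le_abs z]

lemma posRoot_le_of_le (hk : 0 ≤ k) {z u : ℝ} (hu : 0 < u) (h : 2 * k ≤ u ^ 2 + z * u) :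
    posRoot k z ≤ u := by
  have hroot := sq_posRoot_add_mul hk z
  have hsum : 0 ≤ posRoot k z + z := by
    have := abs_le_sqrt_eight_mul_add_sq hk z
    unfold posRoot
    linarith [neg_abs_le z]
  nlinarith

lemma abs_posRoot_sub_posRoot_le (hk : 0 ≤ k) (z z' : ℝ) :
    |posRoot k z - posRoot k z'| ≤ |z - z'| := by
  have h := abs_sqrt_add_sq_sub_sqrt_add_sq_le (by positivity : 0 ≤ 8 * k) z z'
  unfold posRoot
  rw [show (√(8 * k + z ^ 2) - z) / 2 - (√(8 * k + z' ^ 2) - z') / 2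
    = ((√(8 * k + z ^ 2) - √(8 * k + z' ^ 2)) - (z - z')) / 2 by ring, abs_div, abs_two]
  linarith [abs_sub (√(8 * k + z ^ 2) - √(8 * k + z' ^ 2)) (z - z')]

lemma antitone_posRoot (hk : 0 ≤ k) : Antitone (posRoot k) := by
  intro z' z hzz'
  have h := abs_sqrt_add_sq_sub_sqrt_add_sq_le (by positivity : 0 ≤ 8 * k) z z'
  unfold posRoot
  linarith [le_abs_self (√(8 * k + z ^ 2) - √(8 * k + z' ^ 2)),
    abs_of_nonneg (sub_nonneg.2 hzz')]

lemma abs_sq_posRoot_sub_sq_div_le (hk : 0 ≤ k) {z z' M : ℝ} (hz : z ≤ -1) (hzz' : z' ≤ z)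
    (hM : z - z' ≤ M) : |posRoot k z ^ 2 - posRoot k z' ^ 2| / posRoot k z ≤ (2 + M) * M := by
  set F := posRoot k z
  set F' := posRoot k z'
  have hF : 1 ≤ F := by linarith [neg_le_posRoot hk z]
  have hFF' : F ≤ F' := antitone_posRoot hk hzz'
  have hdiff : F' - F ≤ M := by
    have h := abs_posRoot_sub_posRoot_le hk z' z
    rw [abs_of_nonneg (sub_nonneg.2 hFF'), abs_sub_comm, abs_of_nonneg (sub_nonneg.2 hzz')] at h
    linarith
  have hM0 : 0 ≤ M := by linarith
  rw [abs_sub_comm, abs_of_nonneg (by nlinarith), div_le_iff₀ (by linarith)]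
  calc F' ^ 2 - F ^ 2 = (F' - F) * (F' + F) := by ring
    _ ≤ M * (2 * F + M) := by nlinarith
    _ ≤ (2 + M) * M * F := by nlinarith [mul_le_mul_of_nonneg_left hF (mul_nonneg hM0 hM0)]

end posRoot

lemma isLeast_sq_posRoot_PhiInv {k p : ℝ} (hk : 0 < k) (hp0 : 0 < p) (hp : p < 1 / 2) :
    IsLeast {n : ℝ | 2 * k < n ∧ stdNormCDF ((2 * k - n) / √n) ≤ p}
      (posRoot k (PhiInv p) ^ 2) := by
  set z := PhiInv p
  have hΦz : stdNormCDF z = p := stdNormCDF_PhiInv hp0 hp.le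
  have hz : z < 0 := stdNormCDF_strictMono.lt_iff_lt.1 (by rw [hΦz, stdNormCDF_zero]; exact hp)
  set f := posRoot k z
  have hf : 0 < f := by linarith [neg_le_posRoot hk.le z]
  have hroot := sq_posRoot_add_mul hk.le z
  constructor
  · refine ⟨by nlinarith, ?_⟩
    rw [sqrt_sq hf.le, show (2 * k - f ^ 2) / f = z by field_simp; linarith, hΦz]
  · rintro n ⟨hkn, hΦn⟩
    have hn : 0 < n := by linarith
    have hsqrt : 0 < √n := sqrt_pos.2 hn
    have harg : (2 * k - n) / √n ≤ z := stdNormCDF_strictMono.le_iff_le.1 (hΦn.trans hΦz.ge)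
    rw [div_le_iff₀ hsqrt] at harg
    calc f ^ 2 ≤ √n ^ 2 := by
          refine pow_le_pow_left₀ hf.le (posRoot_le_of_le hk.le hsqrt ?_) 2
          nlinarith [sq_sqrt hn.le]
      _ = n := sq_sqrt hn.le

lemma abs_n0_sub_n0_div_sqrt_le {c c' : ℝ} {k : ℕ} (hc' : 0 < c') (hcc : c' ≤ c) (hk : 0 < k)
    (hck : c / k ≤ stdNormCDF (-1)) :
    |n0 c k - n0 c' k| / √(n0 c k) ≤ (2 + (c - c') / c') * ((c - c') / c') := by
  have hk' : (0 : ℝ) < k := Nat.cast_pos.2 hk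
  have hq : 0 < c' / k := div_pos hc' hk'
  have hqp : c' / k ≤ c / k := div_le_div_of_nonneg_right hcc hk'.le
  have hp2 : c / k ≤ 1 / 2 := hck.trans stdNormCDF_neg_one_lt_half.le
  have hz : PhiInv (c / k) ≤ -1 := PhiInv_le_of_le_stdNormCDF (hq.trans_le hqp) hp2 hck
  have hzz' : PhiInv (c' / k) ≤ PhiInv (c / k) := PhiInv_le_of_le_stdNormCDF hq (hqp.trans hp2)
    (hqp.trans_eq (stdNormCDF_PhiInv (hq.trans_le hqp) hp2).symm)
  have hM : PhiInv (c / k) - PhiInv (c' / k) ≤ (c - c') / c' := by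
    have h := PhiInv_sub_PhiInv_le hq hqp hck
    rwa [show (c / k - c' / k) / (c' / k) = (c - c') / c' by field_simp] at h
  have hf : 0 ≤ posRoot k (PhiInv (c / k)) := by linarith [neg_le_posRoot hk'.le (PhiInv (c / k))]
  rw [show n0 c k = posRoot k (PhiInv (c / k)) ^ 2 from rfl,
    show n0 c' k = posRoot k (PhiInv (c' / k)) ^ 2 from rfl, sqrt_sq hf]
  exact abs_sq_posRoot_sub_sq_div_le hk'.le hz hzz' hM

/-- Stability of the continuum solution `n₀(c,k)` in `c`: `n₀(c,k)` is the least real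
`n > 2k` with `Φ_{k,n} ≤ c/k`, and for fixed `0 < c' < c`, the normalized difference
`|n₀(c,k) − n₀(c',k)| / √(n₀(c,k))` is bounded by a finite constant `C = C(c,c')` for all
sufficiently large `k`. -/
theorem continuum_solution_stability
    (c c' : ℝ) (hc' : 0 < c') (hcc : c' < c) :
    (∀ k : ℕ, 2 * c < k →
      IsLeast {n : ℝ | 2 * (k : ℝ) < n ∧
        stdNormCDF ((2 * (k : ℝ) - n) / Real.sqrt n) ≤ c / k} (n0 c k)) ∧
    ∃ C : ℝ, ∃ k0 : ℕ, ∀ k : ℕ, k0 ≤ k →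
      |n0 c k - n0 c' k| / Real.sqrt (n0 c k) ≤ C := by
  have hc : 0 < c := hc'.trans hcc
  refine ⟨fun k hk => ?_, (2 + (c - c') / c') * ((c - c') / c'), ?_⟩
  · have hk0 : (0 : ℝ) < k := by linarith
    exact isLeast_sq_posRoot_PhiInv hk0 (div_pos hc hk0) (by rw [div_lt_iff₀ hk0]; linarith)
  · have hlarge : ∀ᶠ k : ℕ in atTop, 0 < k ∧ c / k ≤ stdNormCDF (-1) :=
      (eventually_gt_atTop 0).and ((tendsto_const_div_atTop_nhds_zero_nat c).eventually
        (ge_mem_nhds (stdNormCDF_pos (-1))))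
    obtain ⟨k0, hk0⟩ := eventually_atTop.1 hlarge
    exact ⟨k0, fun k hk => abs_n0_sub_n0_div_sqrt_le hc' hcc.le (hk0 k hk).1 (hk0 k hk).2⟩
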